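/- arXiv:1205.3578 — 2 statements merged into one kernel-verified Lean document; each statement's English description precedes it below -/
import Mathlib

section
/- Let σ, σ₁ be real numbers with 1 < σ ≤ σ₁ and c₀, c₁ > 0, and let 𝖼 : [0,∞) → [0,∞) be continuous with c₀(1+θ)^(σ-1) ≤ 𝖼(θ) ≤ c₁(1+θ)^(σ₁-1) for all θ ≥ 0. Define h(θ) = ∫₀^θ 𝖼(s) ds. Then h is strictly increasing on [0,∞), and there exist constants d₀, d₁ > 0 such that for all w ≥ 0, d₁(w^{1/σ₁} − 1) ≤ h⁻¹(w) ≤ d₀(w^{1/σ} + 1). -/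
/-!
Since `c` is bounded below by `c₀ (1+θ)^(σ-1) > 0`, `h` is strictly increasing, and integrating
the two bounds on `c` squeezes `h θ` between the explicit enthalpies
`c₀/σ ((1+θ)^σ - 1)` and `c₁/σ₁ ((1+θ)^σ₁ - 1)` of the power-law heat capacities.
Inverting these explicit functions gives the bounds on `θ = h⁻¹ w`: for the upper one,
`1 + θ^σ ≤ (1+θ)^σ`; for the lower one, convexity of `t ↦ t^σ₁` at the point
`1 - d + d w^(1/σ₁)` with `d = min (σ₁/c₁) 1 ≤ 1`, which yields `d (w^(1/σ₁) - 1) ≤ θ`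
even for small `w`.
-/

open MeasureTheory Set

noncomputable def modelEnthalpy (k r θ : ℝ) : ℝ := k / r * ((1 + θ) ^ r - 1)

lemma integral_mul_one_add_rpow_sub_one {r : ℝ} (hr : 0 < r) (k θ : ℝ) :
    ∫ s in (0:ℝ)..θ, k * (1 + s) ^ (r - 1) = modelEnthalpy k r θ := by
  rw [intervalIntegral.integral_const_mul,
    intervalIntegral.integral_comp_add_left (fun x => x ^ (r - 1)),
    integral_rpow (Or.inl (by linarith))]
  simp only [add_zero, Real.one_rpow, sub_add_cancel, modelEnthalpy]
  ring

lemma intervalIntegrable_of_continuousOn_Ici {f : ℝ → ℝ} {a x y : ℝ}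
    (hf : ContinuousOn f (Ici a)) (hx : a ≤ x) (hy : a ≤ y) :
    IntervalIntegrable f volume x y :=
  (hf.mono fun _ ht => le_trans (le_inf hx hy) ht.1).intervalIntegrable

lemma strictMonoOn_integral_of_pos {f : ℝ → ℝ} {a : ℝ} (hf : ContinuousOn f (Ici a))
    (hpos : ∀ x ≥ a, 0 < f x) :
    StrictMonoOn (fun θ => ∫ s in a..θ, f s) (Ici a) := by
  intro x hx y hy hxy
  have hsplit : (∫ s in a..x, f s) + ∫ s in x..y, f s = ∫ s in a..y, f s :=
    intervalIntegral.integral_add_adjacent_intervals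
      (intervalIntegrable_of_continuousOn_Ici hf le_rfl hx)
      (intervalIntegrable_of_continuousOn_Ici hf hx hy)
  have hgap : 0 < ∫ s in x..y, f s :=
    intervalIntegral.intervalIntegral_pos_of_pos_on
      (intervalIntegrable_of_continuousOn_Ici hf hx hy)
      (fun t ht => hpos t (le_trans hx ht.1.le)) hxy
  dsimp only
  linarith

section ComparisonWithModel

variable {f : ℝ → ℝ} {k r θ : ℝ}

lemma continuousOn_mul_one_add_rpow (k r : ℝ) :
    ContinuousOn (fun s : ℝ => k * (1 + s) ^ r) (Ici 0) :=
  continuousOn_const.mul <| (continuous_const.add continuous_id).continuousOn.rpow_const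
    fun x hx => Or.inl (by simp only [Pi.add_apply, id]; linarith [mem_Ici.mp hx])

lemma modelEnthalpy_le_integral (hr : 0 < r) (hf : ContinuousOn f (Ici 0)) (hθ : 0 ≤ θ)
    (hle : ∀ s ≥ 0, k * (1 + s) ^ (r - 1) ≤ f s) :
    modelEnthalpy k r θ ≤ ∫ s in (0:ℝ)..θ, f s := by
  rw [← integral_mul_one_add_rpow_sub_one hr]
  exact intervalIntegral.integral_mono_on hθ
    (intervalIntegrable_of_continuousOn_Ici (continuousOn_mul_one_add_rpow k _) le_rfl hθ)
    (intervalIntegrable_of_continuousOn_Ici hf le_rfl hθ) fun s hs => hle s hs.1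

lemma integral_le_modelEnthalpy (hr : 0 < r) (hf : ContinuousOn f (Ici 0)) (hθ : 0 ≤ θ)
    (hle : ∀ s ≥ 0, f s ≤ k * (1 + s) ^ (r - 1)) :
    ∫ s in (0:ℝ)..θ, f s ≤ modelEnthalpy k r θ := by
  rw [← integral_mul_one_add_rpow_sub_one hr]
  exact intervalIntegral.integral_mono_on hθ
    (intervalIntegrable_of_continuousOn_Ici hf le_rfl hθ)
    (intervalIntegrable_of_continuousOn_Ici (continuousOn_mul_one_add_rpow k _) le_rfl hθ)
    fun s hs => hle s hs.1

end ComparisonWithModel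

section InverseBounds

variable {k r θ w : ℝ}

lemma div_mul_modelEnthalpy (hk : k ≠ 0) (hr : r ≠ 0) :
    r / k * modelEnthalpy k r θ = (1 + θ) ^ r - 1 := by
  unfold modelEnthalpy
  field_simp

lemma le_rpow_of_modelEnthalpy_le (hr : 1 ≤ r) (hk : 0 < k) (hθ : 0 ≤ θ)
    (hw : modelEnthalpy k r θ ≤ w) :
    θ ≤ (r / k) ^ (1 / r) * w ^ (1 / r) := by
  have hr₀ : 0 < r := by linarith
  have hsuper : 1 + θ ^ r ≤ (1 + θ) ^ r := by
    simpa using Real.add_rpow_le_rpow_add zero_le_one hθ hr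
  have hpow : θ ^ r ≤ r / k * w := by
    have := mul_le_mul_of_nonneg_left hw (div_pos hr₀ hk).le
    rw [div_mul_modelEnthalpy hk.ne' hr₀.ne'] at this
    linarith
  have hw₀ : 0 ≤ w :=
    (mul_nonneg_iff_of_pos_left (div_pos hr₀ hk)).mp ((Real.rpow_nonneg hθ r).trans hpow)
  rw [← Real.mul_rpow (by positivity) hw₀, one_div]
  exact (Real.le_rpow_inv_iff_of_pos hθ (by positivity) hr₀).mpr hpow

lemma one_sub_add_mul_rpow_le {p d z : ℝ} (hp : 1 ≤ p) (hd₀ : 0 ≤ d) (hd₁ : d ≤ 1)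
    (hz : 0 ≤ z) :
    (1 - d + d * z) ^ p ≤ 1 - d + d * z ^ p := by
  simpa using (convexOn_rpow hp).2 (mem_Ici.mpr zero_le_one) (mem_Ici.mpr hz)
    (sub_nonneg.mpr hd₁) hd₀ (sub_add_cancel 1 d)

lemma min_mul_rpow_sub_one_le_of_le_modelEnthalpy (hr : 1 ≤ r) (hk : 0 < k) (hθ : 0 ≤ θ)
    (hw₀ : 0 ≤ w) (hw : w ≤ modelEnthalpy k r θ) :
    min (r / k) 1 * (w ^ (1 / r) - 1) ≤ θ := by
  have hr₀ : 0 < r := by linarith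
  set d := min (r / k) 1
  have hd₀ : 0 ≤ d := le_min (by positivity) zero_le_one
  have hd₁ : d ≤ 1 := min_le_right _ _
  have hdw : d * w ≤ r / k * w := mul_le_mul_of_nonneg_right (min_le_left _ _) hw₀
  have hrw : r / k * w ≤ (1 + θ) ^ r - 1 := by
    rw [← div_mul_modelEnthalpy hk.ne' hr₀.ne']
    exact mul_le_mul_of_nonneg_left hw (div_pos hr₀ hk).le
  have hpow : (1 - d + d * w ^ (1 / r)) ^ r ≤ (1 + θ) ^ r := by
    calc (1 - d + d * w ^ (1 / r)) ^ r ≤ 1 - d + d * (w ^ (1 / r)) ^ r :=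
          one_sub_add_mul_rpow_le hr hd₀ hd₁ (by positivity)
      _ = 1 - d + d * w := by rw [one_div, Real.rpow_inv_rpow hw₀ hr₀.ne']
      _ ≤ (1 + θ) ^ r := by linarith
  have hbase : 1 - d + d * w ^ (1 / r) ≤ 1 + θ :=
    (Real.rpow_le_rpow_iff (by have := Real.rpow_nonneg hw₀ (1 / r); nlinarith)
      (by linarith) hr₀).mp hpow
  linarith

end InverseBounds

theorem enthalpy_inverse_growth_general
    (σ σ₁ c₀ c₁ : ℝ) (hσ : 1 < σ) (hσσ₁ : σ ≤ σ₁) (hc₀ : 0 < c₀) (hc₁ : 0 < c₁)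
    (c : ℝ → ℝ) (hc_cont : ContinuousOn c (Ici 0))
    (hc_bound : ∀ θ ≥ (0:ℝ), c₀ * (1+θ) ^ (σ-1) ≤ c θ ∧ c θ ≤ c₁ * (1+θ) ^ (σ₁-1))
    (h : ℝ → ℝ) (hh : ∀ θ, h θ = ∫ s in (0:ℝ)..θ, c s) :
    StrictMonoOn h (Ici 0) ∧
      ∃ d₀ > (0:ℝ), ∃ d₁ > (0:ℝ), ∀ w ≥ (0:ℝ), ∀ θ ≥ (0:ℝ), h θ = w →
        d₁ * (w ^ (1/σ₁) - 1) ≤ θ ∧ θ ≤ d₀ * (w ^ (1/σ) + 1) := by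
  have hc_pos : ∀ θ ≥ (0:ℝ), 0 < c θ := fun θ hθ =>
    (mul_pos hc₀ (Real.rpow_pos_of_pos (by linarith) _)).trans_le (hc_bound θ hθ).1
  obtain rfl : h = fun θ => ∫ s in (0:ℝ)..θ, c s := funext hh
  refine ⟨strictMonoOn_integral_of_pos hc_cont hc_pos, (σ / c₀) ^ (1 / σ),
    Real.rpow_pos_of_pos (div_pos (by linarith) hc₀) _,
    min (σ₁ / c₁) 1, lt_min (div_pos (by linarith) hc₁) one_pos, ?_⟩
  intro w hw θ hθ hθw
  constructor
  · have h_le_model := integral_le_modelEnthalpy (by linarith) hc_cont hθ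
      fun s hs => (hc_bound s hs).2
    exact min_mul_rpow_sub_one_le_of_le_modelEnthalpy (by linarith) hc₁ hθ hw (hθw ▸ h_le_model)
  · have h_model_le := modelEnthalpy_le_integral (by linarith) hc_cont hθ
      fun s hs => (hc_bound s hs).1
    calc θ ≤ (σ / c₀) ^ (1 / σ) * w ^ (1 / σ) :=
          le_rpow_of_modelEnthalpy_le hσ.le hc₀ hθ (hθw ▸ h_model_le)
      _ ≤ (σ / c₀) ^ (1 / σ) * (w ^ (1 / σ) + 1) := by gcongr; linarith

/-- Growth estimate (2.34) for the inverse enthalpy map `Θ = h⁻¹` under Hypothesis (I). -/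
theorem enthalpy_inverse_growth
    (σ σ₁ c₀ c₁ : ℝ) (hσ : 1 < σ) (hσσ₁ : σ ≤ σ₁) (hc₀ : 0 < c₀) (hc₁ : 0 < c₁)
    (c : ℝ → ℝ) (hc_cont : ContinuousOn c (Ici 0))
    (hc_nonneg : ∀ θ ≥ (0:ℝ), 0 ≤ c θ)
    (hc_bound : ∀ θ ≥ (0:ℝ), c₀ * (1+θ) ^ (σ-1) ≤ c θ ∧ c θ ≤ c₁ * (1+θ) ^ (σ₁-1))
    (h : ℝ → ℝ) (hh : ∀ θ, h θ = ∫ s in (0:ℝ)..θ, c s) :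
    StrictMonoOn h (Ici 0) ∧
      ∃ d₀ > (0:ℝ), ∃ d₁ > (0:ℝ), ∀ w ≥ (0:ℝ), ∀ θ ≥ (0:ℝ), h θ = w →
        d₁ * (w ^ (1/σ₁) - 1) ≤ θ ∧ θ ≤ d₀ * (w ^ (1/σ) + 1) :=
  enthalpy_inverse_growth_general σ σ₁ c₀ c₁ hσ hσσ₁ hc₀ hc₁ c hc_cont hc_bound h hh
end

section
/- Let Ω ⊂ ℝ^d be a bounded measurable set, τ > 0, and let w_{k-1}, w_k, g ∈ L²(Ω) with w_{k-1} ≥ 0 a.e. and g ≥ 0 a.e. Suppose w_k ∈ H¹(Ω) satisfies the variational identity (1/τ)∫_Ω (w_k − w_{k-1}) v + ∫_Ω K̃ ∇w_k · ∇v + ∫_Ω Θ̃ v = ∫_Ω g v for all v ∈ H¹(Ω), where K̃ ∈ L^∞(Ω) with K̃ ≥ c₂ > 0 a.e. and Θ̃ ∈ L²(Ω) with Θ̃ · w_k⁻ = 0 a.e. (Θ̃ vanishes where w_k < 0). Then w_k ≥ 0 a.e. in Ω. -/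
open MeasureTheory

/-!
Test the variational identity with `v = -w_k⁻`. The gradient term is `∫ K̃ |∇w_k⁻|² ≥ 0`, the
`Θ̃` term vanishes and the source term is `≤ 0`, so the time-difference term
`∫ (w_k - w_{k-1}) (-w_k⁻)` is `≤ 0`. Pointwise this integrand dominates
`(|w_k⁻|² - |w_{k-1}⁻|²) / 2 = |w_k⁻|² / 2 ≥ 0`, hence it vanishes a.e., and so does `w_k⁻`.
-/

lemma half_sq_negPart_sub_le_sub_mul_neg_negPart (a b : ℝ) :
    (max (-a) 0 ^ 2 - max (-b) 0 ^ 2) / 2 ≤ (a - b) * -max (-a) 0 := by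
  rcases le_total a 0 with ha | ha <;> rcases le_total b 0 with hb | hb <;>
    simp only [max_eq_left, max_eq_right, neg_nonneg, neg_nonpos, ha, hb] <;>
    nlinarith [sq_nonneg (a - b)]

/-- Modelling: `H¹(Ω)` is a set `S` of pairs (function, gradient), closed under the truncation
`v ↦ -v⁻` with the correspondingly truncated gradient. -/
theorem discrete_enthalpy_positivity_general
    {Ω : Type*} [MeasurableSpace Ω] (μ : Measure Ω)
    (d : ℕ)
    (S : Set ((Ω → ℝ) × (Ω → EuclideanSpace ℝ (Fin d))))
    (hS_trunc : ∀ p ∈ S,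
      (⟨fun x => -(max (-(p.1 x)) 0),
        fun x => if p.1 x < 0 then p.2 x else 0⟩ :
          (Ω → ℝ) × (Ω → EuclideanSpace ℝ (Fin d))) ∈ S)
    (τ : ℝ) (hτ : 0 < τ) (c₂ C : ℝ) (hc₂ : 0 < c₂)
    (wprev wk g Θ' K' : Ω → ℝ) (gwk : Ω → EuclideanSpace ℝ (Fin d))
    (hwk_mem : (⟨wk, gwk⟩ : (Ω → ℝ) × (Ω → EuclideanSpace ℝ (Fin d))) ∈ S)
    (hwprev2 : MemLp wprev 2 μ) (hwk2 : MemLp wk 2 μ)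
    (hK_bound : ∀ᵐ x ∂μ, c₂ ≤ K' x ∧ K' x ≤ C)
    (hwprev_nonneg : ∀ᵐ x ∂μ, 0 ≤ wprev x)
    (hg_nonneg : ∀ᵐ x ∂μ, 0 ≤ g x)
    (hΘ_vanish : ∀ᵐ x ∂μ, Θ' x * max (-(wk x)) 0 = 0)
    (hvar : ∀ p ∈ S,
      (1/τ) * ∫ x, (wk x - wprev x) * p.1 x ∂μ
        + ∫ x, K' x * (inner ℝ (gwk x) (p.2 x) : ℝ) ∂μ
        + ∫ x, Θ' x * p.1 x ∂μ
      = ∫ x, g x * p.1 x ∂μ) :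
    ∀ᵐ x ∂μ, 0 ≤ wk x := by
  have htest := hvar _ (hS_trunc _ hwk_mem)
  simp only at htest
  have hgrad : 0 ≤ ∫ x, K' x * (inner ℝ (gwk x) (if wk x < 0 then gwk x else 0) : ℝ) ∂μ := by
    refine integral_nonneg_of_ae ?_
    filter_upwards [hK_bound] with x hK
    split_ifs
    · exact mul_nonneg (hc₂.le.trans hK.1) real_inner_self_nonneg
    · simp
  have hΘ : ∫ x, Θ' x * -max (-(wk x)) 0 ∂μ = 0 := by
    refine integral_eq_zero_of_ae ?_
    filter_upwards [hΘ_vanish] with x hx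
    simp [hx]
  have hsource : ∫ x, g x * -max (-(wk x)) 0 ∂μ ≤ 0 := by
    refine integral_nonpos_of_ae ?_
    filter_upwards [hg_nonneg] with x hx
    exact mul_nonpos_of_nonneg_of_nonpos hx (neg_nonpos.2 (le_max_right _ _))
  have htime : ∫ x, (wk x - wprev x) * -max (-(wk x)) 0 ∂μ ≤ 0 := by
    have := one_div_pos.2 hτ
    nlinarith
  have hpointwise : ∀ᵐ x ∂μ, max (-(wk x)) 0 ^ 2 / 2 ≤ (wk x - wprev x) * -max (-(wk x)) 0 := by
    filter_upwards [hwprev_nonneg] with x hx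
    simpa [max_eq_right (neg_nonpos.2 hx)] using
      half_sq_negPart_sub_le_sub_mul_neg_negPart (wk x) (wprev x)
  have htime_nonneg := hpointwise.mono fun x hx => (by positivity : (0 : ℝ) ≤ _).trans hx
  have hzero := (integral_eq_zero_iff_of_nonneg_ae htime_nonneg
    ((hwk2.sub hwprev2).integrable_mul hwk2.neg_part.neg)).1
    (le_antisymm htime (integral_nonneg_of_ae htime_nonneg))
  filter_upwards [hpointwise, hzero] with x hle hx
  have hneg : max (-(wk x)) 0 = 0 := by
    rw [Pi.zero_apply] at hx
    nlinarith [le_max_right (-(wk x)) 0]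
  simpa using hneg

/-- Step 2 of Lemma 3.6 (positivity of the discrete enthalpy, formula (3.34)):
if the discrete enthalpy `w_k` solves the variational identity of the time-discrete heat
equation with nonnegative data, then `w_k ≥ 0` a.e. Here the Sobolev space `H¹(Ω)` is
modelled as a set `S` of pairs (function, gradient), closed under the truncation
`v ↦ −v⁻` with the correspondingly truncated gradient. -/
theorem discrete_enthalpy_positivity
    {Ω : Type*} [MeasurableSpace Ω] (μ : Measure Ω) [IsFiniteMeasure μ]
    (d : ℕ)
    (S : Set ((Ω → ℝ) × (Ω → EuclideanSpace ℝ (Fin d))))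
    (hS_trunc : ∀ p ∈ S,
      (⟨fun x => -(max (-(p.1 x)) 0),
        fun x => if p.1 x < 0 then p.2 x else 0⟩ :
          (Ω → ℝ) × (Ω → EuclideanSpace ℝ (Fin d))) ∈ S)
    (τ : ℝ) (hτ : 0 < τ) (c₂ C : ℝ) (hc₂ : 0 < c₂)
    (wprev wk g Θ' K' : Ω → ℝ) (gwk : Ω → EuclideanSpace ℝ (Fin d))
    (hwk_mem : (⟨wk, gwk⟩ : (Ω → ℝ) × (Ω → EuclideanSpace ℝ (Fin d))) ∈ S)
    (hwprev2 : MemLp wprev 2 μ) (hwk2 : MemLp wk 2 μ) (hg2 : MemLp g 2 μ)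
    (hΘ2 : MemLp Θ' 2 μ)
    (hK_bound : ∀ᵐ x ∂μ, c₂ ≤ K' x ∧ K' x ≤ C)
    (hwprev_nonneg : ∀ᵐ x ∂μ, 0 ≤ wprev x)
    (hg_nonneg : ∀ᵐ x ∂μ, 0 ≤ g x)
    (hΘ_vanish : ∀ᵐ x ∂μ, Θ' x * max (-(wk x)) 0 = 0)
    (hvar : ∀ p ∈ S,
      (1/τ) * ∫ x, (wk x - wprev x) * p.1 x ∂μ
        + ∫ x, K' x * (inner ℝ (gwk x) (p.2 x) : ℝ) ∂μ
        + ∫ x, Θ' x * p.1 x ∂μ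
      = ∫ x, g x * p.1 x ∂μ) :
    ∀ᵐ x ∂μ, 0 ≤ wk x :=
  discrete_enthalpy_positivity_general μ d S hS_trunc τ hτ c₂ C hc₂ wprev wk g Θ' K' gwk hwk_mem
    hwprev2 hwk2 hK_bound hwprev_nonneg hg_nonneg hΘ_vanish hvar
end
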